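/- Let Σ_t = {x + t ν_F(x)} flow with velocity ∂Φ/∂t = fν + ξ where f = F∘ν and ξ = DF|_ν is tangential, and suppose H_F > 0 along the flow. Then the quantity Q(t) = n ∫_{Σ_t} (F∘ν_t)/H_F dA_t satisfies Q′(t) = −n ∫_{Σ_t} ( tr(S_F²)/H_F² + 1 ) (F∘ν_t) dA_t ≤ −(n+1) ∫_{Σ_t} F∘ν_t dA_t < 0; in particular Q is strictly decreasing. -/

import Mathlib

/-!
Along the flow `F∘ν` is constant in time: its velocity `⟨DF(ν), -∇f + dν(ξ)⟩` vanishes because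
`∇f = dν(ξ)`. A frame computation (Leibniz rules, the Codazzi equation and the total symmetry
of `D³F`) turns the evolution equation of `H_F` into `∂_t H_F = tr(S_F²)`, and `div ξ - nHf = -H_F`.
The first-variation formula for `dA_t` then gives `Q' = -n ∫ (tr(S_F²)/H_F² + 1) f dA`, and the
bound follows from `tr(S_F²) ≥ H_F²/n`: the Cauchy–Schwarz inequality for the symmetric matrix
`√A S √A`, whose trace is `H_F` and whose square has trace `tr(S_F²)`.
-/

open Finset MeasureTheory

noncomputable section

/-- Kronecker delta. -/
def kron {n : ℕ} (i j : Fin n) : ℝ := if i = j then 1 else 0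

/-- Covariant derivative of a 1-tensor `T` in an orthonormal frame `{e_i}` with
directional derivatives `D i = e_i` and connection coefficients
`Γ k i j = ω_{ki}(e_j)`: `T_{i;j} = e_j(T_i) + Σ_k T_k ω_{ki}(e_j)`. -/
def cov1 {n : ℕ} {S : Type} (D : Fin n → (S → ℝ) → S → ℝ)
    (Γ : Fin n → Fin n → Fin n → S → ℝ) (T : Fin n → S → ℝ)
    (i j : Fin n) (s : S) : ℝ :=
  D j (T i) s + ∑ k, T k s * Γ k i j s

/-- Covariant derivative of a 2-tensor. -/
def cov2 {n : ℕ} {S : Type} (D : Fin n → (S → ℝ) → S → ℝ)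
    (Γ : Fin n → Fin n → Fin n → S → ℝ) (T : Fin n → Fin n → S → ℝ)
    (i j k : Fin n) (s : S) : ℝ :=
  D k (T i j) s + (∑ l, T l j s * Γ l i k s) + ∑ l, T i l s * Γ l j k s

/-- The anisotropic Laplacian `Δ_F f = div(A_F ∇ f)` in frame components. -/
def lapF {n : ℕ} {S : Type} (D : Fin n → (S → ℝ) → S → ℝ)
    (Γ : Fin n → Fin n → Fin n → S → ℝ) (Aν : Fin n → Fin n → S → ℝ)
    (f : S → ℝ) (s : S) : ℝ :=
  ∑ i, cov1 D Γ (fun k t => ∑ l, Aν k l t * D l f t) i i s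

/-- Components `s_{ij} = Σ_l (A_{il}∘ν) h_{lj}` of the anisotropic Weingarten
operator `S_F = A_F ∘ S`. -/
def sF {n : ℕ} {S : Type} (Aν h : Fin n → Fin n → S → ℝ)
    (i j : Fin n) (s : S) : ℝ :=
  ∑ l, Aν i l s * h l j s

/-- The anisotropic mean curvature `H_F = tr S_F`. -/
def HF {n : ℕ} {S : Type} (Aν h : Fin n → Fin n → S → ℝ) (s : S) : ℝ :=
  ∑ i, sF Aν h i i s

/-- `tr(S_F²) = Σ_{i,j} s_{ij} s_{ji}`. -/
def trSF2 {n : ℕ} {S : Type} (Aν h : Fin n → Fin n → S → ℝ) (s : S) : ℝ :=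
  ∑ i, ∑ j, sF Aν h i j s * sF Aν h j i s

/-- `tr(A_F S²) = Σ_{i,j,k} (A_{ik}∘ν) h_{kj} h_{ji}`. -/
def trAFS2 {n : ℕ} {S : Type} (Aν h : Fin n → Fin n → S → ℝ) (s : S) : ℝ :=
  ∑ i, ∑ j, sF Aν h i j s * h j i s

lemma map_sum_of_map_add {S α : Type*} (d : (S → ℝ) → ℝ)
    (hd : ∀ f g : S → ℝ, d (fun t => f t + g t) = d f + d g)
    (F : α → S → ℝ) (t : Finset α) :
    d (fun x => ∑ j ∈ t, F j x) = ∑ j ∈ t, d (F j) := by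
  rw [← Finset.sum_fn]
  exact map_sum (AddMonoidHom.mk' d hd) F t

lemma map_neg_of_map_add {S : Type*} (d : (S → ℝ) → ℝ)
    (hd : ∀ f g : S → ℝ, d (fun t => f t + g t) = d f + d g) (f : S → ℝ) :
    d (fun t => -f t) = -d f :=
  map_neg (AddMonoidHom.mk' d hd) f

lemma sum_sum_eq_zero_of_antisymm {ι : Type*} [Fintype ι] (M : ι → ι → ℝ)
    (hM : ∀ p q, M p q = -M q p) :
    ∑ p, ∑ q, M p q = 0 := by
  have hneg : ∑ p, ∑ q, M p q = -∑ p, ∑ q, M p q := by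
    conv_lhs => rw [Finset.sum_comm]
    simp only [← Finset.sum_neg_distrib]
    exact Finset.sum_congr rfl fun p _ => Finset.sum_congr rfl fun q _ => hM q p
  linarith

lemma sum_sum_sum_mul_sum_eq_of_symm {ι : Type*} [Fintype ι] (A : ι → ι → ι → ℝ)
    (H : ι → ι → ℝ) (v : ι → ℝ)
    (hA : ∀ i l p, A i l p = A i p l) :
    ∑ i, ∑ l, (∑ p, A i l p * H p i) * (∑ j, H l j * v j)
      = ∑ j, v j * ∑ i, ∑ l, (∑ p, A i l p * H p j) * H l i := by
  simp only [Finset.sum_mul, Finset.mul_sum]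
  conv_rhs => rw [← Finset.sum_comm_cycle]
  refine Finset.sum_congr rfl fun i _ => ?_
  rw [Finset.sum_comm]
  conv_rhs => rw [Finset.sum_comm]
  refine Finset.sum_congr rfl fun j _ => ?_
  rw [Finset.sum_comm]
  refine Finset.sum_congr rfl fun l _ => Finset.sum_congr rfl fun p _ => ?_
  rw [hA]
  ring

lemma sum_sum_mul_sum_comm {ι : Type*} [Fintype ι] (a : ι → ι → ℝ) (c : ι → ι → ι → ℝ)
    (v : ι → ℝ) :
    ∑ i, ∑ l, a i l * ∑ j, c l i j * v j = ∑ j, v j * ∑ i, ∑ l, a i l * c l i j := by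
  simp only [Finset.mul_sum]
  conv_rhs => rw [← Finset.sum_comm_cycle]
  exact Finset.sum_congr rfl fun i _ => Finset.sum_congr rfl fun l _ =>
    Finset.sum_congr rfl fun j _ => by ring

lemma sum_mul_sub_mul_kron {n : ℕ} (H a : Fin n → ℝ) (f : ℝ) (j : Fin n) :
    ∑ k, H k * (a k - f * kron j k) = ∑ k, H k * a k - f * H j := by
  simp [kron, mul_sub, Finset.sum_sub_distrib, mul_comm]

lemma Matrix.IsHermitian.sq_trace_le_card_mul_trace_mul_self {ι : Type*} [Fintype ι]
    {B : Matrix ι ι ℝ} (hB : B.IsHermitian) :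
    B.trace ^ 2 ≤ Fintype.card ι * (B * B).trace := by
  have hdiag : ∑ i, B i i ^ 2 ≤ (B * B).trace := by
    refine Finset.sum_le_sum fun i _ => ?_
    rw [sq]
    refine Finset.single_le_sum (f := fun j => B i j * B j i) (fun j _ => ?_) (Finset.mem_univ i)
    rw [← hB.apply i j, star_trivial]
    exact mul_self_nonneg _
  calc B.trace ^ 2 ≤ Fintype.card ι * ∑ i, B i i ^ 2 := sq_sum_le_card_mul_sum_sq
    _ ≤ Fintype.card ι * (B * B).trace := by gcongr

open scoped MatrixOrder in
lemma Matrix.PosSemidef.sq_trace_mul_le {ι : Type*} [Fintype ι] [DecidableEq ι]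
    {A H : Matrix ι ι ℝ} (hA : A.PosSemidef) (hH : H.IsHermitian) :
    (A * H).trace ^ 2 ≤ Fintype.card ι * (A * H * (A * H)).trace := by
  set R := CFC.sqrt A
  have hRR : R * R = A := CFC.sqrt_mul_sqrt_self A hA.nonneg
  have hR : R.IsHermitian := (Matrix.nonneg_iff_posSemidef.mp (CFC.sqrt_nonneg A)).1
  have hB : (R * H * R).IsHermitian := by
    simpa only [hR.eq] using Matrix.isHermitian_conjTranspose_mul_mul R hH
  have htr : (A * H).trace = (R * H * R).trace := by
    rw [Matrix.trace_mul_cycle, hRR]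
  have htr2 : (A * H * (A * H)).trace = (R * H * R * (R * H * R)).trace := by
    rw [Matrix.mul_assoc, Matrix.trace_mul_comm, ← hRR]
    simp only [Matrix.mul_assoc]
    rw [Matrix.trace_mul_comm R]
    simp only [Matrix.mul_assoc]
  rw [htr, htr2]
  exact hB.sq_trace_le_card_mul_trace_mul_self

lemma add_one_mul_le_mul_div_sq_add_one_mul {a T H F : ℝ} (hH : H ≠ 0) (hF : 0 ≤ F)
    (hHT : H ^ 2 ≤ a * T) :
    (a + 1) * F ≤ a * ((T / H ^ 2 + 1) * F) := by
  have hratio : 1 ≤ a * T / H ^ 2 := by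
    rw [le_div_iff₀ (by positivity)]
    linarith
  calc (a + 1) * F ≤ (a + a * T / H ^ 2) * F := by gcongr
    _ = a * ((T / H ^ 2 + 1) * F) := by ring

section EvolvingIntegral

variable {S : Type*} [MeasurableSpace S] {μ : ℝ → Measure S} {t₀ : ℝ} {m : S → ℝ}

/-- No integrability is needed: compare the first-variation formula for the affine family
`g u = X + (u - t₀) (Y - X m)` with the one for `(1 + (u - t₀)) g u`. -/
lemma integral_add_of_hasDerivAt_integral
    (hflow : ∀ (g : ℝ → S → ℝ) (g' : S → ℝ),
      (∀ s, HasDerivAt (fun u => g u s) (g' s) t₀) →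
      HasDerivAt (fun u => ∫ s, g u s ∂(μ u)) (∫ s, (g' s + g t₀ s * m s) ∂(μ t₀)) t₀)
    (X Y : S → ℝ) :
    ∫ s, (X s + Y s) ∂(μ t₀) = (∫ s, X s ∂(μ t₀)) + ∫ s, Y s ∂(μ t₀) := by
  set Z := fun s => Y s - X s * m s
  have hc : HasDerivAt (fun u : ℝ => 1 + (u - t₀)) 1 t₀ := by
    simpa using ((hasDerivAt_id t₀).sub_const t₀).const_add 1
  have hg : ∀ s, HasDerivAt (fun u => X s + (u - t₀) * Z s) (Z s) t₀ := fun s => by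
    simpa using (((hasDerivAt_id t₀).sub_const t₀).mul_const (Z s)).const_add (X s)
  have hJ := hflow _ _ hg
  have hcJ := hflow _ _ fun s => hc.mul (hg s)
  simp only [Pi.mul_apply, integral_const_mul] at hcJ
  have := hcJ.unique (hc.mul hJ)
  simpa only [sub_self, zero_mul, add_zero, one_mul, Z, add_assoc, sub_add_cancel] using this

lemma integral_mono_of_integral_add {ν : Measure S}
    (hadd : ∀ X Y : S → ℝ, ∫ s, (X s + Y s) ∂ν = (∫ s, X s ∂ν) + ∫ s, Y s ∂ν)
    {f g : S → ℝ} (hfg : ∀ s, f s ≤ g s) :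
    ∫ s, f s ∂ν ≤ ∫ s, g s ∂ν := by
  have hsplit := hadd (fun s => g s - f s) f
  simp only [sub_add_cancel] at hsplit
  have hnonneg : 0 ≤ ∫ s, (g s - f s) ∂ν := integral_nonneg fun s => sub_nonneg.2 (hfg s)
  linarith

lemma hasDerivAt_integral_div_of_hasDerivAt_integral
    (hflow : ∀ (g : ℝ → S → ℝ) (g' : S → ℝ),
      (∀ s, HasDerivAt (fun u => g u s) (g' s) t₀) →
      HasDerivAt (fun u => ∫ s, g u s ∂(μ u)) (∫ s, (g' s + g t₀ s * m s) ∂(μ t₀)) t₀)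
    {f H : ℝ → S → ℝ} {T : S → ℝ} (hf : ∀ s, HasDerivAt (fun u => f u s) 0 t₀)
    (hH : ∀ s, HasDerivAt (fun u => H u s) (T s) t₀) (hH₀ : ∀ s, H t₀ s ≠ 0)
    (hm : ∀ s, m s = -H t₀ s) :
    HasDerivAt (fun u => ∫ s, f u s / H u s ∂(μ u))
      (-∫ s, (T s / H t₀ s ^ 2 + 1) * f t₀ s ∂(μ t₀)) t₀ := by
  refine (hflow _ _ fun s => (hf s).div (hH s) (hH₀ s)).congr_deriv ?_
  rw [← integral_neg]
  refine integral_congr_ae (Filter.Eventually.of_forall fun s => ?_)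
  simp only [hm, Pi.div_apply]
  field_simp [hH₀ s]
  ring

end EvolvingIntegral

section FrameCalculus

variable {n : ℕ} {S : Type} (D : Fin n → (S → ℝ) → S → ℝ)
  (Γ : Fin n → Fin n → Fin n → S → ℝ)

lemma cov1_sum_mul (hΓ : ∀ i j k s, Γ i j k s = -Γ j i k s)
    (hDadd : ∀ i (f g : S → ℝ) s, D i (fun t => f t + g t) s = D i f s + D i g s)
    (hDmul : ∀ i (f g : S → ℝ) s,
      D i (fun t => f t * g t) s = D i f s * g s + f s * D i g s)
    (M : Fin n → Fin n → S → ℝ) (w : Fin n → S → ℝ) (i j : Fin n) (s : S) :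
    cov1 D Γ (fun k t => ∑ l, M k l t * w l t) i j s
      = ∑ l, (cov2 D Γ M i l j s * w l s + M i l s * cov1 D Γ w l j s) := by
  have hD : D j (fun t => ∑ l, M i l t * w l t) s
      = ∑ l, (D j (M i l) s * w l s + M i l s * D j (w l) s) := by
    rw [map_sum_of_map_add (D j · s) (hDadd j · · s)]
    exact Finset.sum_congr rfl fun l _ => hDmul j (M i l) (w l) s
  have hskew : ∑ q, ∑ l, Γ q l j s * (M i q s * w l s + M i l s * w q s) = 0 :=
    sum_sum_eq_zero_of_antisymm _ fun q l => by rw [hΓ q l j s]; ring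
  have hcomm : ∑ k, (∑ l, M k l s * w l s) * Γ k i j s
      = ∑ l, ∑ q, M q l s * Γ q i j s * w l s := by
    simp only [Finset.sum_mul]
    rw [Finset.sum_comm]
    exact Finset.sum_congr rfl fun l _ => Finset.sum_congr rfl fun q _ => by ring
  have hsplit : ∑ l, (cov2 D Γ M i l j s * w l s + M i l s * cov1 D Γ w l j s)
      = ∑ l, (D j (M i l) s * w l s + M i l s * D j (w l) s)
        + ∑ l, ∑ q, M q l s * Γ q i j s * w l s
        + ∑ q, ∑ l, Γ q l j s * (M i q s * w l s + M i l s * w q s) := by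
    rw [Finset.sum_comm (f := fun q l => Γ q l j s * _)]
    simp only [← Finset.sum_add_distrib]
    refine Finset.sum_congr rfl fun l _ => ?_
    simp only [cov1, cov2, mul_add, Finset.mul_sum, Finset.sum_add_distrib, mul_comm,
      mul_left_comm]
    ring
  rw [hsplit, hskew, cov1, hD, hcomm, add_zero]

lemma D_sum_sum_mul (hΓ : ∀ i j k s, Γ i j k s = -Γ j i k s)
    (hDadd : ∀ i (f g : S → ℝ) s, D i (fun t => f t + g t) s = D i f s + D i g s)
    (hDmul : ∀ i (f g : S → ℝ) s,
      D i (fun t => f t * g t) s = D i f s * g s + f s * D i g s)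
    (M N : Fin n → Fin n → S → ℝ) (j : Fin n) (s : S) :
    D j (fun t => ∑ i, ∑ l, M i l t * N l i t) s
      = ∑ i, ∑ l, (cov2 D Γ M i l j s * N l i s + M i l s * cov2 D Γ N l i j s) := by
  have hD : D j (fun t => ∑ i, ∑ l, M i l t * N l i t) s
      = ∑ i, ∑ l, (D j (M i l) s * N l i s + M i l s * D j (N l i) s) := by
    rw [map_sum_of_map_add (D j · s) (hDadd j · · s)]
    refine Finset.sum_congr rfl fun i _ => ?_
    rw [map_sum_of_map_add (D j · s) (hDadd j · · s)]
    exact Finset.sum_congr rfl fun l _ => hDmul j (M i l) (N l i) s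
  have hskew₁ : ∑ i, ∑ l, ∑ q,
      Γ q i j s * (M q l s * N l i s + M i l s * N l q s) = 0 := by
    rw [Finset.sum_congr rfl fun i _ => Finset.sum_comm]
    refine sum_sum_eq_zero_of_antisymm _ fun i q => ?_
    rw [hΓ i q j s, ← Finset.sum_neg_distrib]
    exact Finset.sum_congr rfl fun l _ => by ring
  have hskew₂ : ∑ i, ∑ l, ∑ q,
      Γ q l j s * (M i q s * N l i s + M i l s * N q i s) = 0 :=
    Finset.sum_eq_zero fun i _ =>
      sum_sum_eq_zero_of_antisymm _ fun l q => by rw [hΓ q l j s]; ring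
  have hsplit : ∑ i, ∑ l, (cov2 D Γ M i l j s * N l i s + M i l s * cov2 D Γ N l i j s)
      = ∑ i, ∑ l, (D j (M i l) s * N l i s + M i l s * D j (N l i) s)
        + ∑ i, ∑ l, ∑ q, Γ q i j s * (M q l s * N l i s + M i l s * N l q s)
        + ∑ i, ∑ l, ∑ q, Γ q l j s * (M i q s * N l i s + M i l s * N q i s) := by
    simp only [← Finset.sum_add_distrib]
    refine Finset.sum_congr rfl fun i _ => Finset.sum_congr rfl fun l _ => ?_
    simp only [cov2, mul_add, Finset.mul_sum, Finset.sum_add_distrib, mul_comm, mul_left_comm]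
    ring
  rw [hsplit, hskew₁, hskew₂, hD, add_zero, add_zero]

lemma sum_sum_mul_sum_kron_eq_trSF2_sub (Aν h : Fin n → Fin n → S → ℝ)
    (hsymm : ∀ i j s, h i j s = h j i s) (f : ℝ) (s : S) :
    ∑ i, ∑ l, Aν i l s * ∑ j, h l j s * ∑ k, h i k s * (Aν j k s - f * kron j k)
      = trSF2 Aν h s - f * trAFS2 Aν h s := by
  have hkron : ∀ i j, ∑ k, h i k s * (Aν j k s - f * kron j k)
      = sF Aν h j i s - f * h j i s := fun i j => by
    rw [sum_mul_sub_mul_kron, sF, hsymm i j]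
    exact congrArg (· - _) (Finset.sum_congr rfl fun k _ => by rw [hsymm i k]; ring)
  rw [trSF2, trAFS2, Finset.mul_sum, ← Finset.sum_sub_distrib]
  refine Finset.sum_congr rfl fun i _ => ?_
  have hcontract : ∀ X : Fin n → ℝ,
      ∑ l, Aν i l s * ∑ j, h l j s * X j = ∑ j, sF Aν h i j s * X j := fun X => by
    simp only [sF, Finset.mul_sum, Finset.sum_mul]
    rw [Finset.sum_comm]
    exact Finset.sum_congr rfl fun j _ => Finset.sum_congr rfl fun l _ => by ring
  rw [hcontract, Finset.mul_sum, ← Finset.sum_sub_distrib]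
  exact Finset.sum_congr rfl fun j _ => by rw [hkron]; ring

lemma cov1_neg
    (hDadd : ∀ i (f g : S → ℝ) s, D i (fun t => f t + g t) s = D i f s + D i g s)
    (w : Fin n → S → ℝ) (i j : Fin n) (s : S) :
    cov1 D Γ (fun k t => -w k t) i j s = -cov1 D Γ w i j s := by
  simp only [cov1, map_neg_of_map_add (D j · s) (hDadd j · · s), neg_mul,
    Finset.sum_neg_distrib, neg_add]

lemma cov1_D_Fν (hΓ : ∀ i j k s, Γ i j k s = -Γ j i k s)
    (hDadd : ∀ i (f g : S → ℝ) s, D i (fun t => f t + g t) s = D i f s + D i g s)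
    (hDmul : ∀ i (f g : S → ℝ) s,
      D i (fun t => f t * g t) s = D i f s * g s + f s * D i g s)
    (h : Fin n → Fin n → S → ℝ)
    (hCodazzi : ∀ i j k s, cov2 D Γ h i j k s = cov2 D Γ h i k j s)
    (Fν : S → ℝ) (Fiν : Fin n → S → ℝ) (Aν : Fin n → Fin n → S → ℝ)
    (hFν : ∀ i s, D i Fν s = -∑ j, h i j s * Fiν j s)
    (hFiν : ∀ i j s, cov1 D Γ Fiν i j s =
      -∑ k, h j k s * (Aν i k s - Fν s * kron i k))
    (l i : Fin n) (s : S) :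
    cov1 D Γ (fun k => D k Fν) l i s
      = ∑ j, h l j s * ∑ k, h i k s * (Aν j k s - Fν s * kron j k)
        - ∑ j, cov2 D Γ h l i j s * Fiν j s := by
  have hgrad : (fun k => D k Fν) = fun k t => ∑ j, h k j t * -Fiν j t := by
    funext k t
    rw [hFν k t, ← Finset.sum_neg_distrib]
    simp only [mul_neg]
  rw [hgrad, cov1_sum_mul D Γ hΓ hDadd hDmul, ← Finset.sum_sub_distrib]
  refine Finset.sum_congr rfl fun j _ => ?_
  rw [cov1_neg D Γ hDadd, hFiν, hCodazzi]
  ring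

lemma D_HF (hΓ : ∀ i j k s, Γ i j k s = -Γ j i k s)
    (hDadd : ∀ i (f g : S → ℝ) s, D i (fun t => f t + g t) s = D i f s + D i g s)
    (hDmul : ∀ i (f g : S → ℝ) s,
      D i (fun t => f t * g t) s = D i f s * g s + f s * D i g s)
    (h Aν : Fin n → Fin n → S → ℝ) (AAA : Fin n → Fin n → Fin n → S → ℝ)
    (hAν : ∀ i j k s, cov2 D Γ Aν i j k s = -∑ p, AAA i j p s * h p k s)
    (j : Fin n) (s : S) :
    D j (fun t => HF Aν h t) s
      = ∑ i, ∑ l, Aν i l s * cov2 D Γ h l i j s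
        - ∑ i, ∑ l, (∑ p, AAA i l p s * h p j s) * h l i s := by
  simp only [HF, sF]
  rw [D_sum_sum_mul D Γ hΓ hDadd hDmul]
  simp only [hAν, ← Finset.sum_sub_distrib]
  exact Finset.sum_congr rfl fun i _ => Finset.sum_congr rfl fun l _ => by ring

lemma lapF_eq (hΓ : ∀ i j k s, Γ i j k s = -Γ j i k s)
    (hDadd : ∀ i (f g : S → ℝ) s, D i (fun t => f t + g t) s = D i f s + D i g s)
    (hDmul : ∀ i (f g : S → ℝ) s,
      D i (fun t => f t * g t) s = D i f s * g s + f s * D i g s)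
    (Aν : Fin n → Fin n → S → ℝ) (f : S → ℝ) (s : S) :
    lapF D Γ Aν f s = ∑ i, ∑ l, cov2 D Γ Aν i l i s * D l f s
      + ∑ i, ∑ l, Aν i l s * cov1 D Γ (fun k => D k f) l i s := by
  simp only [lapF, cov1_sum_mul D Γ hΓ hDadd hDmul Aν (fun l => D l f), Finset.sum_add_distrib]

lemma lapF_add_trAFS2_mul_add_sum_mul_D_HF (hΓ : ∀ i j k s, Γ i j k s = -Γ j i k s)
    (hDadd : ∀ i (f g : S → ℝ) s, D i (fun t => f t + g t) s = D i f s + D i g s)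
    (hDmul : ∀ i (f g : S → ℝ) s,
      D i (fun t => f t * g t) s = D i f s * g s + f s * D i g s)
    (h : Fin n → Fin n → S → ℝ) (hsymm : ∀ i j s, h i j s = h j i s)
    (hCodazzi : ∀ i j k s, cov2 D Γ h i j k s = cov2 D Γ h i k j s)
    (Fν : S → ℝ) (Fiν : Fin n → S → ℝ) (Aν : Fin n → Fin n → S → ℝ)
    (AAA : Fin n → Fin n → Fin n → S → ℝ)
    (hAAAsymm : ∀ i j k s, AAA i j k s = AAA i k j s)
    (hFν : ∀ i s, D i Fν s = -∑ j, h i j s * Fiν j s)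
    (hFiν : ∀ i j s, cov1 D Γ Fiν i j s =
      -∑ k, h j k s * (Aν i k s - Fν s * kron i k))
    (hAν : ∀ i j k s, cov2 D Γ Aν i j k s = -∑ p, AAA i j p s * h p k s)
    (s : S) :
    lapF D Γ Aν Fν s + trAFS2 Aν h s * Fν s + ∑ j, Fiν j s * D j (fun t => HF Aν h t) s
      = trSF2 Aν h s := by
  have hthird : ∑ i, ∑ l, cov2 D Γ Aν i l i s * D l Fν s
      = ∑ j, Fiν j s * ∑ i, ∑ l, (∑ p, AAA i l p s * h p j s) * h l i s := by
    simp only [hAν, hFν, neg_mul_neg]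
    exact sum_sum_sum_mul_sum_eq_of_symm _ _ _ fun i l p => hAAAsymm i l p s
  have hhess : ∑ i, ∑ l, Aν i l s * cov1 D Γ (fun k => D k Fν) l i s
      = trSF2 Aν h s - Fν s * trAFS2 Aν h s
        - ∑ j, Fiν j s * ∑ i, ∑ l, Aν i l s * cov2 D Γ h l i j s := by
    simp only [cov1_D_Fν D Γ hΓ hDadd hDmul h hCodazzi Fν Fiν Aν hFν hFiν,
      mul_sub (Aν _ _ s), Finset.sum_sub_distrib]
    rw [sum_sum_mul_sum_kron_eq_trSF2_sub Aν h hsymm, sum_sum_mul_sum_comm]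
  simp only [lapF_eq D Γ hΓ hDadd hDmul, hthird, hhess,
    D_HF D Γ hΓ hDadd hDmul h Aν AAA hAν, mul_sub, Finset.sum_sub_distrib]
  ring

lemma sum_cov1_Fiν_diag (h Aν : Fin n → Fin n → S → ℝ) (hsymm : ∀ i j s, h i j s = h j i s)
    (Fν : S → ℝ) (Fiν : Fin n → S → ℝ)
    (hFiν : ∀ i j s, cov1 D Γ Fiν i j s =
      -∑ k, h j k s * (Aν i k s - Fν s * kron i k))
    (s : S) :
    ∑ i, cov1 D Γ Fiν i i s = Fν s * ∑ i, h i i s - HF Aν h s := by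
  simp only [hFiν, sum_mul_sub_mul_kron, HF, sF, Finset.mul_sum, ← Finset.sum_sub_distrib]
  refine Finset.sum_congr rfl fun i _ => ?_
  rw [neg_sub, sub_right_inj]
  exact Finset.sum_congr rfl fun k _ => by rw [hsymm]; ring

lemma sq_HF_le_mul_trSF2 (Aν h : Fin n → Fin n → S → ℝ)
    (hAsymm : ∀ i j s, Aν i j s = Aν j i s) (hsymm : ∀ i j s, h i j s = h j i s)
    (hApos : ∀ s (v : Fin n → ℝ), v ≠ 0 → 0 < ∑ i, ∑ j, Aν i j s * v i * v j) (s : S) :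
    HF Aν h s ^ 2 ≤ n * trSF2 Aν h s := by
  set A : Matrix (Fin n) (Fin n) ℝ := Matrix.of fun i j => Aν i j s
  set H : Matrix (Fin n) (Fin n) ℝ := Matrix.of fun i j => h i j s
  have hA : A.PosDef := by
    refine Matrix.PosDef.of_dotProduct_mulVec_pos
      (Matrix.IsHermitian.ext fun i j => hAsymm j i s) fun v hv => ?_
    refine (hApos s v hv).trans_eq ?_
    simp only [dotProduct, Matrix.mulVec, Finset.mul_sum, A, Matrix.of_apply, star_trivial]
    exact Finset.sum_congr rfl fun i _ => Finset.sum_congr rfl fun j _ => by ring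
  have hH : H.IsHermitian := Matrix.IsHermitian.ext fun i j => hsymm j i s
  simpa [Matrix.trace, Matrix.mul_apply, HF, trSF2, sF, A, H] using
    hA.posSemidef.sq_trace_mul_le hH

end FrameCalculus

theorem stmt_18_general (n : ℕ) (S : Type)
    (D : Fin n → (S → ℝ) → S → ℝ)
    (Γ : Fin n → Fin n → Fin n → S → ℝ)
    -- metric compatibility: `ω_{ij} = -ω_{ji}`
    (hΓ : ∀ i j k s, Γ i j k s = -Γ j i k s)
    -- `D i` is a derivation (linearity and Leibniz rule)
    (hDadd : ∀ i (f g : S → ℝ) s, D i (fun t => f t + g t) s = D i f s + D i g s)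
    (hDmul : ∀ i (f g : S → ℝ) s,
      D i (fun t => f t * g t) s = D i f s * g s + f s * D i g s)
    (h : Fin n → Fin n → S → ℝ)
    (hsymm : ∀ i j s, h i j s = h j i s)
    -- Codazzi equation `h_{ijk} = h_{ikj}`
    (hCodazzi : ∀ i j k s, cov2 D Γ h i j k s = cov2 D Γ h i k j s)
    (Fν : S → ℝ) (Fiν : Fin n → S → ℝ)
    (Aν : Fin n → Fin n → S → ℝ) (hAsymm : ∀ i j s, Aν i j s = Aν j i s)
    (AAA : Fin n → Fin n → Fin n → S → ℝ)
    -- `A_{ij,k}` is totally symmetric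
    (hAAAsymm : ∀ i j k s, AAA i j k s = AAA j i k s ∧ AAA i j k s = AAA i k j s)
    -- `(F∘ν)_i = -Σ_j h_{ij} (F_j∘ν)`
    (hFν : ∀ i s, D i Fν s = -∑ j, h i j s * Fiν j s)
    -- `(F_i∘ν)_j = -Σ_k h_{jk} (F_{ik}∘ν)`, with `F_{ik} = A_{ik} - F δ_{ik}`
    (hFiν : ∀ i j s, cov1 D Γ Fiν i j s =
      -∑ k, h j k s * (Aν i k s - Fν s * kron i k))
    -- `(A_{ij}∘ν)_k = -Σ_p (A_{ij,p}∘ν) h_{pk}`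
    (hAν : ∀ i j k s, cov2 D Γ Aν i j k s = -∑ p, AAA i j p s * h p k s)
    (hApos : ∀ s (v : Fin n → ℝ), v ≠ 0 → 0 < ∑ i, ∑ j, Aν i j s * v i * v j)
    (hFpos : ∀ s, 0 < Fν s)
    (hHFpos : ∀ s, 0 < HF Aν h s)
    [MeasurableSpace S]
    -- the evolving area measures `dA_t` and the evolving data, at time `t₀`
    (t₀ : ℝ) (μ : ℝ → Measure S)
    (Fνt HFt : ℝ → S → ℝ)
    (hFν0 : Fνt t₀ = Fν) (hHF0 : HFt t₀ = HF Aν h)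
    -- mean curvature `H` and the divergence of the tangential part
    -- `ξ = DF|_ν` of the flow velocity
    (Hm divξ : S → ℝ)
    (hHm : ∀ s, (n : ℝ) * Hm s = ∑ i, h i i s)
    (hdivξ : ∀ s, divξ s = ∑ i, cov1 D Γ Fiν i i s)
    -- evolution of the area measure: `∂/∂t dA_t = (div ξ - nHf) dA_t`
    (hflow : ∀ (g : ℝ → S → ℝ) (g' : S → ℝ),
      (∀ s, HasDerivAt (fun u => g u s) (g' s) t₀) →
      HasDerivAt (fun u => ∫ s, g u s ∂(μ u))
        (∫ s, (g' s + g t₀ s * (divξ s - (n : ℝ) * Hm s * Fν s)) ∂(μ t₀)) t₀)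
    -- evolution of `F∘ν_t`: `∂/∂t (F∘ν_t) = ⟨DF(ν_t), -∇f + dν_t(ξ)⟩`
    (hdF : ∀ s, HasDerivAt (fun u => Fνt u s)
      (∑ j, Fiν j s * (-D j Fν s + -∑ k, h j k s * Fiν k s)) t₀)
    -- evolution of `H_F`: `∂H_F/∂t = Δ_F f + tr(A_F S²) f + ⟨∇H_F, ξ⟩`
    (hdHF : ∀ s, HasDerivAt (fun u => HFt u s)
      (lapF D Γ Aν Fν s + trAFS2 Aν h s * Fν s +
        ∑ j, Fiν j s * D j (fun t => HF Aν h t) s) t₀)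
    (hint : 0 < ∫ s, Fν s ∂(μ t₀))
    (Q : ℝ → ℝ)
    (hQ : ∀ t, Q t = (n : ℝ) * ∫ s, Fνt t s / HFt t s ∂(μ t)) :
    HasDerivAt Q
        (-(n : ℝ) * ∫ s, (trSF2 Aν h s / (HF Aν h s) ^ 2 + 1) * Fν s ∂(μ t₀)) t₀ ∧
      (-(n : ℝ) * ∫ s, (trSF2 Aν h s / (HF Aν h s) ^ 2 + 1) * Fν s ∂(μ t₀) ≤
        -((n : ℝ) + 1) * ∫ s, Fν s ∂(μ t₀)) ∧
      -(n : ℝ) * ∫ s, (trSF2 Aν h s / (HF Aν h s) ^ 2 + 1) * Fν s ∂(μ t₀) < 0 := by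
  have hFνt : ∀ s, HasDerivAt (fun u => Fνt u s) 0 t₀ := fun s => by
    convert hdF s using 1
    refine (Finset.sum_eq_zero fun j _ => ?_).symm
    rw [hFν]
    ring
  have hHFt : ∀ s, HasDerivAt (fun u => HFt u s) (trSF2 Aν h s) t₀ := fun s => by
    rw [← lapF_add_trAFS2_mul_add_sum_mul_D_HF D Γ hΓ hDadd hDmul h hsymm hCodazzi Fν Fiν Aν
      AAA (fun i j k s => (hAAAsymm i j k s).2) hFν hFiν hAν s]
    exact hdHF s
  have hdiv : ∀ s, divξ s - n * Hm s * Fν s = -HFt t₀ s := fun s => by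
    rw [hdivξ, sum_cov1_Fiν_diag D Γ h Aν hsymm Fν Fiν hFiν, ← hHm, hHF0]
    ring
  have hderiv := (hasDerivAt_integral_div_of_hasDerivAt_integral hflow hFνt hHFt
    (fun s => hHF0 ▸ (hHFpos s).ne') hdiv).const_mul (n : ℝ)
  rw [hFν0, hHF0, mul_neg, ← neg_mul, ← funext hQ] at hderiv
  have hbound : ((n : ℝ) + 1) * ∫ s, Fν s ∂(μ t₀)
      ≤ n * ∫ s, (trSF2 Aν h s / (HF Aν h s) ^ 2 + 1) * Fν s ∂(μ t₀) := by
    rw [← integral_const_mul, ← integral_const_mul]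
    exact integral_mono_of_integral_add (integral_add_of_hasDerivAt_integral hflow) fun s =>
      add_one_mul_le_mul_div_sq_add_one_mul (hHFpos s).ne' (hFpos s).le
        (sq_HF_le_mul_trSF2 Aν h hAsymm hsymm hApos s)
  have hpos : 0 < ((n : ℝ) + 1) * ∫ s, Fν s ∂(μ t₀) := by positivity
  exact ⟨hderiv, by linarith, by linarith⟩

/-- Monotonicity of `Q(t) = n ∫_{Σ_t} (F∘ν_t)/H_F dA_t` along the anisotropic
parallel flow `∂Φ/∂t = ν_F = fν + ξ`, `f = F∘ν`, `ξ = DF|_ν`: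
`Q'(t) = -n ∫ (tr(S_F²)/H_F² + 1)(F∘ν_t) dA_t ≤ -(n+1) ∫ F∘ν_t dA_t < 0`,
so `Q` is strictly decreasing. -/
theorem stmt_18 (n : ℕ) (S : Type)
    (D : Fin n → (S → ℝ) → S → ℝ)
    (Γ : Fin n → Fin n → Fin n → S → ℝ)
    -- metric compatibility: `ω_{ij} = -ω_{ji}`
    (hΓ : ∀ i j k s, Γ i j k s = -Γ j i k s)
    -- `D i` is a derivation (linearity and Leibniz rule)
    (hDadd : ∀ i (f g : S → ℝ) s, D i (fun t => f t + g t) s = D i f s + D i g s)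
    (hDmul : ∀ i (f g : S → ℝ) s,
      D i (fun t => f t * g t) s = D i f s * g s + f s * D i g s)
    (h : Fin n → Fin n → S → ℝ)
    (hsymm : ∀ i j s, h i j s = h j i s)
    -- Codazzi equation `h_{ijk} = h_{ikj}`
    (hCodazzi : ∀ i j k s, cov2 D Γ h i j k s = cov2 D Γ h i k j s)
    (Fν : S → ℝ) (Fiν : Fin n → S → ℝ)
    (Aν : Fin n → Fin n → S → ℝ) (hAsymm : ∀ i j s, Aν i j s = Aν j i s)
    (AAA : Fin n → Fin n → Fin n → S → ℝ)
    -- `A_{ij,k}` is totally symmetric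
    (hAAAsymm : ∀ i j k s, AAA i j k s = AAA j i k s ∧ AAA i j k s = AAA i k j s)
    -- `(F∘ν)_i = -Σ_j h_{ij} (F_j∘ν)`
    (hFν : ∀ i s, D i Fν s = -∑ j, h i j s * Fiν j s)
    -- `(F_i∘ν)_j = -Σ_k h_{jk} (F_{ik}∘ν)`, with `F_{ik} = A_{ik} - F δ_{ik}`
    (hFiν : ∀ i j s, cov1 D Γ Fiν i j s =
      -∑ k, h j k s * (Aν i k s - Fν s * kron i k))
    -- `(A_{ij}∘ν)_k = -Σ_p (A_{ij,p}∘ν) h_{pk}`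
    (hAν : ∀ i j k s, cov2 D Γ Aν i j k s = -∑ p, AAA i j p s * h p k s)
    (hApos : ∀ s (v : Fin n → ℝ), v ≠ 0 → 0 < ∑ i, ∑ j, Aν i j s * v i * v j)
    (hFpos : ∀ s, 0 < Fν s)
    (hHFpos : ∀ s, 0 < HF Aν h s)
    [MeasurableSpace S]
    -- the evolving area measures `dA_t` and the evolving data, at time `t₀`
    (t₀ : ℝ) (μ : ℝ → Measure S) [IsFiniteMeasure (μ t₀)]
    (Fνt HFt : ℝ → S → ℝ)
    (hFν0 : Fνt t₀ = Fν) (hHF0 : HFt t₀ = HF Aν h)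
    -- mean curvature `H` and the divergence of the tangential part
    -- `ξ = DF|_ν` of the flow velocity
    (Hm divξ : S → ℝ)
    (hHm : ∀ s, (n : ℝ) * Hm s = ∑ i, h i i s)
    (hdivξ : ∀ s, divξ s = ∑ i, cov1 D Γ Fiν i i s)
    -- evolution of the area measure: `∂/∂t dA_t = (div ξ - nHf) dA_t`
    (hflow : ∀ (g : ℝ → S → ℝ) (g' : S → ℝ),
      (∀ s, HasDerivAt (fun u => g u s) (g' s) t₀) →
      HasDerivAt (fun u => ∫ s, g u s ∂(μ u))
        (∫ s, (g' s + g t₀ s * (divξ s - (n : ℝ) * Hm s * Fν s)) ∂(μ t₀)) t₀)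
    -- evolution of `F∘ν_t`: `∂/∂t (F∘ν_t) = ⟨DF(ν_t), -∇f + dν_t(ξ)⟩`
    (hdF : ∀ s, HasDerivAt (fun u => Fνt u s)
      (∑ j, Fiν j s * (-D j Fν s + -∑ k, h j k s * Fiν k s)) t₀)
    -- evolution of `H_F`: `∂H_F/∂t = Δ_F f + tr(A_F S²) f + ⟨∇H_F, ξ⟩`
    (hdHF : ∀ s, HasDerivAt (fun u => HFt u s)
      (lapF D Γ Aν Fν s + trAFS2 Aν h s * Fν s +
        ∑ j, Fiν j s * D j (fun t => HF Aν h t) s) t₀)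
    (hint : 0 < ∫ s, Fν s ∂(μ t₀))
    (Q : ℝ → ℝ)
    (hQ : ∀ t, Q t = (n : ℝ) * ∫ s, Fνt t s / HFt t s ∂(μ t)) :
    HasDerivAt Q
        (-(n : ℝ) * ∫ s, (trSF2 Aν h s / (HF Aν h s) ^ 2 + 1) * Fν s ∂(μ t₀)) t₀ ∧
      (-(n : ℝ) * ∫ s, (trSF2 Aν h s / (HF Aν h s) ^ 2 + 1) * Fν s ∂(μ t₀) ≤
        -((n : ℝ) + 1) * ∫ s, Fν s ∂(μ t₀)) ∧
      -(n : ℝ) * ∫ s, (trSF2 Aν h s / (HF Aν h s) ^ 2 + 1) * Fν s ∂(μ t₀) < 0 :=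
  stmt_18_general n S D Γ hΓ hDadd hDmul h hsymm hCodazzi Fν Fiν Aν hAsymm AAA hAAAsymm hFν hFiν hAν
    hApos hFpos hHFpos t₀ μ Fνt HFt hFν0 hHF0 Hm divξ hHm hdivξ hflow hdF hdHF hint Q hQ
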